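/- Let k be a field and let E be a vector bundle on P^1_k that is generated by global sections, so E ≅ ⊕ O(a_i) with all a_i ≥ 0. If φ: E → O^r is a morphism of sheaves on P^1_k whose cokernel is torsion, then φ is surjective. -/
import Mathlib
open Matrix

lemma homog_zero_eq_C {k : Type*} [CommRing k] {σ : Type*} {p : MvPolynomial σ k}
    (h : p.IsHomogeneous 0) : p = MvPolynomial.C (MvPolynomial.constantCoeff p) := by
  classical
  ext d
  rw [MvPolynomial.coeff_C]
  split_ifs with hd
  · subst hd; rfl
  · exact h.coeff_eq_zero (by
      simp only [ne_eq, Finsupp.degree_eq_zero_iff]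
      exact fun hh => hd hh.symm)

lemma surj_of_surj_map {k K : Type*} [Field k] [CommRing K] [Nontrivial K]
    (f : k →+* K) {r n : ℕ} (N : Matrix (Fin r) (Fin n) k)
    (h : Function.Surjective (N.map f).mulVecLin) :
    Function.Surjective N.mulVecLin := by
  rw [← LinearMap.range_eq_top]
  by_contra hne
  obtain ⟨g, hg0, hbot⟩ := Submodule.exists_dual_map_eq_bot_of_lt_top
    (p := LinearMap.range N.mulVecLin) (lt_top_iff_ne_top.mpr hne) inferInstance
  have hzero : ∀ x ∈ LinearMap.range N.mulVecLin, g x = 0 := by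
    intro x hx
    have := Submodule.mem_map_of_mem (f := g) hx
    rw [hbot, Submodule.mem_bot] at this
    exact this
  set w : Fin r → k := fun j => g (Pi.single j 1) with hw
  have hgx : ∀ x : Fin r → k, g x = ∑ j, x j * w j := by
    intro x
    rw [LinearMap.pi_apply_eq_sum_univ g x]
    simp only [smul_eq_mul, hw]
    congr 1; ext j; congr 2; ext i; simp [Pi.single_apply, eq_comm]
  have hwex : ∃ j0, w j0 ≠ 0 := by
    by_contra hww
    push_neg at hww
    refine hg0 (LinearMap.ext fun x => ?_)
    rw [hgx x]
    simp [hww]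

  obtain ⟨j0, hj0⟩ := hwex
  have hwN : w ᵥ* N = 0 := by
    ext i
    have h1 : g (N *ᵥ Pi.single i 1) = 0 := hzero _ ⟨Pi.single i 1, rfl⟩
    rw [hgx] at h1
    simpa [Matrix.vecMul, dotProduct, Matrix.mulVec, Pi.single_apply, mul_comm] using h1
  obtain ⟨v, hv⟩ := h (Pi.single j0 1)
  have hKw : (fun j => f (w j)) ᵥ* (N.map f) = 0 := by
    have h2 : (fun j => f (w j)) ᵥ* (N.map f) = fun i => f ((w ᵥ* N) i) := by
      ext i
      simp [Matrix.vecMul, dotProduct, Matrix.map_apply, map_sum]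
    rw [h2, hwN]
    ext i; simp
  have hcontr : f (w j0) = 0 := by
    have hd : (fun j => f (w j)) ⬝ᵥ ((N.map f) *ᵥ v) = ((fun j => f (w j)) ᵥ* (N.map f)) ⬝ᵥ v :=
      Matrix.dotProduct_mulVec _ _ _
    rw [hKw] at hd
    have hv' : (N.map f) *ᵥ v = Pi.single j0 1 := hv
    rw [hv'] at hd
    simpa [dotProduct, Pi.single_apply] using hd
  exact hj0 (by
    have : Function.Injective f := f.injective
    exact this (by simpa using hcontr))


/-- A morphism of vector bundles `⊕ᵢ O(aᵢ) → ⊕ⱼ O(bⱼ)` on `ℙ¹_k` is given by a matrix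
whose `(j,i)` entry is a homogeneous polynomial of degree `bⱼ - aᵢ` in the homogeneous
coordinates.  Restricting to the standard chart `U_c` (`c = 0, 1`) trivializes the line
bundles, and the morphism becomes the `k[X]`-linear map given by the matrix obtained by
setting the `c`-th homogeneous coordinate to `X` and the other one to `1`. -/
noncomputable def chartMatrix {k : Type*} [CommRing k] {r n : ℕ} (c : Fin 2)
    (M : Matrix (Fin r) (Fin n) (MvPolynomial (Fin 2) k)) :
    Matrix (Fin r) (Fin n) (Polynomial k) :=
  fun j i => MvPolynomial.aeval (fun v : Fin 2 => if v = c then Polynomial.X else 1) (M j i)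

/-- Let `k` be a field and let `E` be a vector bundle on `ℙ¹_k` generated by
global sections, so `E ≅ ⊕ᵢ O(aᵢ)` with all `aᵢ ≥ 0`.  If `φ : E → O^r` is a morphism of
sheaves on `ℙ¹_k` whose cokernel is torsion, then `φ` is surjective.

Encoding: `E = ⊕_{i < n} O(aᵢ)` with `aᵢ ≥ 0` (global generation).  The morphism `φ` is
the matrix `M`, whose `(j,i)` entry lies in `Hom(O(aᵢ), O) = H⁰(ℙ¹, O(-aᵢ))`, i.e. is a
homogeneous polynomial of degree `-aᵢ` — so it is a constant when `aᵢ = 0` and zero when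
`aᵢ > 0` (hypothesis `hM`).  The cokernel is torsion iff `φ` is surjective at the generic
point, i.e. the matrix is surjective over the function field `k(X)` (hypothesis `htors`).
Surjectivity of `φ` as a map of sheaves means surjectivity of the associated module map
over each of the two standard charts. -/
theorem stmt_1 (k : Type*) [Field k] (r n : ℕ) (a : Fin n → ℤ)
    (hgg : ∀ i, 0 ≤ a i)
    (M : Matrix (Fin r) (Fin n) (MvPolynomial (Fin 2) k))
    (hM : ∀ j i, if a i = 0 then (M j i).IsHomogeneous 0 else M j i = 0)
    (htors : Function.Surjective
      (((chartMatrix 0 M).map (algebraMap (Polynomial k) (RatFunc k))).mulVecLin)) :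
    ∀ c : Fin 2, Function.Surjective ((chartMatrix c M).mulVecLin) := by
  classical
  set N : Matrix (Fin r) (Fin n) k := fun j i => MvPolynomial.constantCoeff (M j i) with hN
  have hMC : ∀ j i, M j i = MvPolynomial.C (N j i) := by
    intro j i
    have hji := hM j i
    split_ifs at hji with hai
    · exact homog_zero_eq_C hji
    · simp [hN, hji]
  have hchart : ∀ c : Fin 2, chartMatrix c M = N.map Polynomial.C := by
    intro c
    ext j i
    simp [chartMatrix, hMC j i, Matrix.map_apply, MvPolynomial.aeval_C,
      Polynomial.algebraMap_eq]
  -- surjectivity of N over k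
  have hNsurj : Function.Surjective N.mulVecLin := by
    apply surj_of_surj_map ((algebraMap (Polynomial k) (RatFunc k)).comp Polynomial.C) N
    have : N.map ((algebraMap (Polynomial k) (RatFunc k)).comp Polynomial.C) =
        (chartMatrix 0 M).map (algebraMap (Polynomial k) (RatFunc k)) := by
      rw [hchart 0, Matrix.map_map]
      rfl
    rw [this]
    exact htors
  -- right inverse over k
  have hcoe : Function.Surjective N.mulVec := by
    simpa [← Matrix.coe_mulVecLin] using hNsurj
  obtain ⟨B, hB⟩ := Matrix.mulVec_surjective_iff_exists_right_inverse.mp hcoe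
  intro c
  rw [hchart c]
  have hBC : (N.map (Polynomial.C : k →+* Polynomial k)) * (B.map Polynomial.C) = 1 := by
    rw [← Matrix.map_mul, hB, Matrix.map_one _ (map_zero _) (map_one _)]
  intro y
  exact ⟨(B.map Polynomial.C) *ᵥ y, by
    simp [Matrix.mulVecLin_apply, Matrix.mulVec_mulVec, hBC]⟩
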